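/- Under the stated hypotheses, the averaged cost along the equilibrium satisfies the second-order expansion (1/Π)·∫₀^Π v(r(a) + p_a(σ)) dσ = (1/4)·(H₁₁·a₁² + H₂₂·a₂²) + o(‖a‖²) as a → 0; that is, the difference between the left-hand side and (1/4)(H₁₁a₁² + H₂₂a₂²), divided by ‖a‖², tends to 0 as a → 0. -/

import Mathlib

/-!
Write `s_i σ = sin (ω_i σ)` and `v x = ½ H(x, x) + o(‖x‖²)` (Taylor at the critical point `0`).
Over the common period `Π`, every `s_i` and every triple product `s_i s_j s_k` integrates to `0`
(the integrand is odd under `σ ↦ Π - σ`), while `∫ s_i s_j = δ_ij Π / 2`. Hence along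
`x = c + p_a` the average of `H(x, x)` is `H(c, c) + ½ (H₁₁ a₁² + H₂₂ a₂²)` and its `s_i`-moment
is `a_i (H c)_i`. Since `r(a) = O(‖a‖)`, the Taylor remainder only contributes `o(‖a‖²)`.

The equilibrium equations therefore give `a_i (H r(a))_i = o(‖a‖²)`. Writing `r(a) = M a + o(‖a‖)`,
the quadratic forms `a_i (H M a)_i` are `o(‖a‖²)`, hence zero; so `H M = 0` and, `H` being
definite, `M = 0`. Then `H(r(a), r(a)) = o(‖a‖²)`, which leaves exactly the claimed expansion.
-/

open Filter Topology Asymptotics Real Set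

theorem intervalIntegral.integral_eq_zero_of_forall_sub_eq_neg {E : Type*} [NormedAddCommGroup E]
    [NormedSpace ℝ E] {f : ℝ → E} {T : ℝ} (hf : ∀ σ, f (T - σ) = -f σ) :
    ∫ σ in (0 : ℝ)..T, f σ = 0 := by
  have h := intervalIntegral.integral_comp_sub_left f T (a := 0) (b := T)
  simp only [hf, intervalIntegral.integral_neg, sub_self, sub_zero] at h
  have h2 : (2 : ℝ) • ∫ σ in (0 : ℝ)..T, f σ = 0 := by
    rw [two_smul]; nth_rw 1 [← h]; exact neg_add_cancel _
  simpa using h2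

theorem sin_mul_sub_eq_neg {ω T : ℝ} {k : ℤ} (h : ω * T = 2 * π * k) (σ : ℝ) :
    sin (ω * (T - σ)) = -sin (ω * σ) := by
  rw [mul_sub, h, mul_comm (2 * π), sin_int_mul_two_pi_sub]

theorem integral_cos_mul_eq_zero {ω T : ℝ} (hω : ω ≠ 0) {k : ℤ} (h : ω * T = 2 * π * k) :
    ∫ σ in (0 : ℝ)..T, cos (ω * σ) = 0 := by
  rw [intervalIntegral.integral_comp_mul_left _ hω, integral_cos, mul_zero, sin_zero, h,
    show 2 * π * k = (2 * k : ℤ) * π by push_cast; ring, sin_int_mul_pi]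
  simp

theorem integral_sin_mul_sin {α β T : ℝ} {k l : ℤ} (hα : α * T = 2 * π * k)
    (hβ : β * T = 2 * π * l) (hαβ : α + β ≠ 0) :
    ∫ σ in (0 : ℝ)..T, sin (α * σ) * sin (β * σ) = if α = β then T / 2 else 0 := by
  have hprod : ∀ σ, sin (α * σ) * sin (β * σ)
      = (cos ((α - β) * σ) - cos ((α + β) * σ)) / 2 := fun σ => by
    rw [sub_mul, add_mul, cos_sub, cos_add]
    ring
  have hsum : (α + β) * T = 2 * π * (k + l : ℤ) := by push_cast; linarith
  simp_rw [hprod]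
  rw [intervalIntegral.integral_div,
    intervalIntegral.integral_sub (by apply Continuous.intervalIntegrable; fun_prop)
      (by apply Continuous.intervalIntegrable; fun_prop),
    integral_cos_mul_eq_zero hαβ hsum]
  split_ifs with h
  · simp [h]
  · have hdiff : (α - β) * T = 2 * π * (k - l : ℤ) := by push_cast; linarith
    rw [integral_cos_mul_eq_zero (sub_ne_zero.2 h) hdiff]
    simp

section BilinearExpansion

variable {ι E : Type*} [Fintype ι] [NormedAddCommGroup E] [NormedSpace ℝ E]

theorem bilin_add_sum_smul (B : E →L[ℝ] E →L[ℝ] ℝ) (c : E) (u : ι → E) (s : ι → ℝ) :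
    B (c + ∑ i, s i • u i) (c + ∑ i, s i • u i)
      = B c c + ∑ i, s i * (B c (u i) + B (u i) c) + ∑ i, ∑ j, s i * s j * B (u i) (u j) := by
  have hquad : ∑ j, ∑ i, s j * (s i * B (u i) (u j))
      = ∑ i, ∑ j, s i * s j * B (u i) (u j) := by
    rw [Finset.sum_comm]
    exact Finset.sum_congr rfl fun i _ => Finset.sum_congr rfl fun j _ => by ring
  simp only [map_add, map_sum, map_smul, add_apply, FunLike.coe_sum, Finset.sum_apply,
    FunLike.coe_smul, Pi.smul_apply, smul_eq_mul, Finset.mul_sum, mul_add,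
    Finset.sum_add_distrib, hquad]
  ring

theorem integral_bilin_add_sum_smul_mul (B : E →L[ℝ] E →L[ℝ] ℝ) (c : E) (u : ι → E)
    {s : ι → ℝ → ℝ} (hs : ∀ i, Continuous (s i)) {w : ℝ → ℝ} (hw : Continuous w) (a b : ℝ) :
    ∫ σ in a..b, B (c + ∑ i, s i σ • u i) (c + ∑ i, s i σ • u i) * w σ
      = (∫ σ in a..b, w σ) * B c c
        + ∑ i, (∫ σ in a..b, s i σ * w σ) * (B c (u i) + B (u i) c)
        + ∑ i, ∑ j, (∫ σ in a..b, s i σ * s j σ * w σ) * B (u i) (u j) := by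
  have hint : ∀ f : ℝ → ℝ, Continuous f → IntervalIntegrable f MeasureTheory.volume a b :=
    fun f hf => hf.intervalIntegrable a b
  have hexpand : ∀ σ, B (c + ∑ i, s i σ • u i) (c + ∑ i, s i σ • u i) * w σ
      = w σ * B c c + ∑ i, s i σ * w σ * (B c (u i) + B (u i) c)
        + ∑ i, ∑ j, s i σ * s j σ * w σ * B (u i) (u j) := fun σ => by
    simp only [bilin_add_sum_smul, add_mul, Finset.sum_mul]
    ring_nf
  simp_rw [hexpand]
  rw [intervalIntegral.integral_add (hint _ (by fun_prop)) (hint _ (by fun_prop)),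
    intervalIntegral.integral_add (hint _ (by fun_prop)) (hint _ (by fun_prop)),
    intervalIntegral.integral_finsetSum fun i _ => hint _ (by fun_prop),
    intervalIntegral.integral_finsetSum fun i _ => hint _ (by fun_prop)]
  simp only [intervalIntegral.integral_mul_const]
  congr 1
  refine Finset.sum_congr rfl fun i _ => ?_
  rw [intervalIntegral.integral_finsetSum fun j _ => hint _ (by fun_prop)]
  simp only [intervalIntegral.integral_mul_const]

end BilinearExpansion

structure CommensurateFrequencies {ι : Type*} (ω : ι → ℝ) (T : ℝ) : Prop where
  pos : ∀ i, 0 < ω i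
  injective : Function.Injective ω
  mul_period : ∀ i, ∃ k : ℤ, ω i * T = 2 * π * k

namespace CommensurateFrequencies

variable {ι E : Type*} {ω : ι → ℝ} {T : ℝ}

theorem sin_mul_sub (hω : CommensurateFrequencies ω T) (i : ι) (σ : ℝ) :
    sin (ω i * (T - σ)) = -sin (ω i * σ) := by
  obtain ⟨k, hk⟩ := hω.mul_period i
  exact sin_mul_sub_eq_neg hk σ

theorem integral_sin (hω : CommensurateFrequencies ω T) (i : ι) :
    ∫ σ in (0 : ℝ)..T, sin (ω i * σ) = 0 :=
  intervalIntegral.integral_eq_zero_of_forall_sub_eq_neg (hω.sin_mul_sub i)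

theorem integral_sin_mul_sin_mul_sin (hω : CommensurateFrequencies ω T) (i j k : ι) :
    ∫ σ in (0 : ℝ)..T, sin (ω i * σ) * sin (ω j * σ) * sin (ω k * σ) = 0 :=
  intervalIntegral.integral_eq_zero_of_forall_sub_eq_neg fun σ => by
    simp only [hω.sin_mul_sub]; ring

theorem integral_sin_mul_sin [DecidableEq ι] (hω : CommensurateFrequencies ω T) (i j : ι) :
    ∫ σ in (0 : ℝ)..T, sin (ω i * σ) * sin (ω j * σ) = if i = j then T / 2 else 0 := by
  obtain ⟨k, hk⟩ := hω.mul_period i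
  obtain ⟨l, hl⟩ := hω.mul_period j
  simp only [_root_.integral_sin_mul_sin hk hl (add_pos (hω.pos i) (hω.pos j)).ne',
    hω.injective.eq_iff]

variable [Fintype ι] [NormedAddCommGroup E] [NormedSpace ℝ E]

theorem integral_bilin_add_sum_smul (hω : CommensurateFrequencies ω T)
    (B : E →L[ℝ] E →L[ℝ] ℝ) (c : E) (u : ι → E) :
    ∫ σ in (0 : ℝ)..T, B (c + ∑ i, sin (ω i * σ) • u i) (c + ∑ i, sin (ω i * σ) • u i)
      = T * B c c + T / 2 * ∑ i, B (u i) (u i) := by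
  classical
  have h := integral_bilin_add_sum_smul_mul B c u (s := fun i σ => sin (ω i * σ))
    (fun i => by fun_prop) (w := fun _ => 1) continuous_const 0 T
  simpa [hω.integral_sin, hω.integral_sin_mul_sin, Finset.mul_sum] using h

theorem integral_bilin_add_sum_smul_mul_sin (hω : CommensurateFrequencies ω T)
    (B : E →L[ℝ] E →L[ℝ] ℝ) (c : E) (u : ι → E) (k : ι) :
    ∫ σ in (0 : ℝ)..T,
        B (c + ∑ i, sin (ω i * σ) • u i) (c + ∑ i, sin (ω i * σ) • u i) * sin (ω k * σ)
      = T / 2 * (B c (u k) + B (u k) c) := by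
  classical
  have h := integral_bilin_add_sum_smul_mul B c u (s := fun i σ => sin (ω i * σ))
    (fun i => by fun_prop) (w := fun σ => sin (ω k * σ)) (by fun_prop) 0 T
  simpa [hω.integral_sin, hω.integral_sin_mul_sin, hω.integral_sin_mul_sin_mul_sin] using h

end CommensurateFrequencies

theorem ContDiff.isLittleO_sub_taylor_two {E F : Type*} [NormedAddCommGroup E] [NormedSpace ℝ E]
    [NormedAddCommGroup F] [NormedSpace ℝ F] {f : E → F} (hf : ContDiff ℝ 2 f) (x₀ : E) :
    (fun h => f (x₀ + h) - f x₀ - fderiv ℝ f x₀ h - (2 : ℝ)⁻¹ • fderiv ℝ (fderiv ℝ f) x₀ h h)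
      =o[𝓝 0] fun h => ‖h‖ ^ 2 := by
  set D := fderiv ℝ (fderiv ℝ f) x₀
  have hsymm : ∀ h k, D h k = D k h := fun h k =>
    (hf.contDiffAt (x := x₀)).isSymmSndFDerivAt (by simp) h k
  have hD : HasFDerivAt (fderiv ℝ f) D x₀ :=
    ((hf.fderiv_right (m := 1) le_rfl).differentiable one_ne_zero x₀).hasFDerivAt
  have hderiv : ∀ h, HasFDerivAt
      (fun h => f (x₀ + h) - fderiv ℝ f x₀ h - (2 : ℝ)⁻¹ • D h h)
      (fderiv ℝ f (x₀ + h) - fderiv ℝ f x₀ - D h) h := by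
    intro h
    have hquad := D.hasFDerivAt_of_bilinear (hasFDerivAt_id h) (hasFDerivAt_id h)
    have hf' := ((hf.differentiable (by simp) (x₀ + h)).hasFDerivAt).comp h
      ((hasFDerivAt_id h).const_add x₀)
    refine ((hf'.sub (fderiv ℝ f x₀).hasFDerivAt).sub
      (hquad.const_smul (2 : ℝ)⁻¹)).congr_fderiv ?_
    ext k
    simp [hsymm k h]
    module
  have hsmall : (fun h => fderiv ℝ f (x₀ + h) - fderiv ℝ f x₀ - D h)
      =o[𝓝[univ] 0] fun h => ‖h - 0‖ ^ 1 := by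
    simpa using (hasFDerivAt_iff_isLittleO_nhds_zero.1 hD).norm_right
  simpa [sub_right_comm _ (f x₀)] using convex_univ.isLittleO_pow_succ (mem_univ 0)
    (fun h _ => (hderiv h).hasFDerivWithinAt) hsmall

theorem Asymptotics.IsLittleO.intervalIntegral {A F : Type*} [NormedAddCommGroup F]
    [NormedSpace ℝ F] {l : Filter A} {f : A → ℝ → F} {g : A → ℝ} {a b : ℝ}
    (h : (fun p : A × ℝ => f p.1 p.2) =o[l ×ˢ 𝓟 (uIoc a b)] fun p => g p.1) :
    (fun x => ∫ σ in a..b, f x σ) =o[l] g := by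
  refine isLittleO_iff.2 fun c hc => ?_
  have hlen : |b - a| / (|b - a| + 1) ≤ 1 := div_le_one_of_le₀ (by linarith) (by positivity)
  filter_upwards [eventually_prod_principal_iff.1 (h.def (c := c / (|b - a| + 1)) (by positivity))]
    with x hx
  calc ‖∫ σ in a..b, f x σ‖ ≤ c / (|b - a| + 1) * ‖g x‖ * |b - a| :=
        intervalIntegral.norm_integral_le_of_norm_le_const hx
    _ = c * ‖g x‖ * (|b - a| / (|b - a| + 1)) := by ring
    _ ≤ c * ‖g x‖ := mul_le_of_le_one_right (by positivity) hlen

theorem Asymptotics.IsLittleO.intervalIntegral_comp_mul {A E : Type*} [NormedAddCommGroup A]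
    [NormedAddCommGroup E] {ρ : E → ℝ} (hρ : ρ =o[𝓝 0] fun x => ‖x‖ ^ 2) {X : A → ℝ → E}
    {C : ℝ} (hX : ∀ᶠ p in 𝓝 0, ∀ σ, ‖X p σ‖ ≤ C * ‖p‖) {w : ℝ → ℝ} (hw : ∀ σ, |w σ| ≤ 1)
    (a b : ℝ) :
    (fun p => ∫ σ in a..b, ρ (X p σ) * w σ) =o[𝓝 0] fun p => ‖p‖ ^ 2 := by
  set l := 𝓝 (0 : A) ×ˢ 𝓟 (uIoc a b)
  have hXO : (fun q : A × ℝ => X q.1 q.2) =O[l] fun q => ‖q.1‖ :=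
    IsBigO.of_bound C ((hX.prod_inl _).mono fun q hq => by simpa using hq q.2)
  have hX0 : Tendsto (fun q : A × ℝ => X q.1 q.2) l (𝓝 0) :=
    hXO.trans_tendsto (tendsto_norm_zero.comp tendsto_fst)
  have hρX : (fun q : A × ℝ => ρ (X q.1 q.2)) =o[l] fun q => ‖q.1‖ ^ 2 :=
    (hρ.comp_tendsto hX0).trans_isBigO (hXO.norm_left.pow 2)
  have hwO : (fun q : A × ℝ => w q.2) =O[l] fun _ => (1 : ℝ) :=
    IsBigO.of_bound 1 (Eventually.of_forall fun q => by simpa using hw q.2)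
  exact IsLittleO.intervalIntegral ((hρX.mul_isBigO hwO).congr_right fun q => mul_one _)

theorem eq_zero_of_isLittleO_sq_of_homogeneous {E F : Type*} [NormedAddCommGroup E]
    [NormedSpace ℝ E] [NormedAddCommGroup F] [NormedSpace ℝ F] {q : E → F}
    (hq : ∀ (t : ℝ) x, q (t • x) = t ^ 2 • q x) (ho : q =o[𝓝 0] fun x => ‖x‖ ^ 2) : q = 0 := by
  funext x
  have hline : Tendsto (fun t : ℝ => t • x) (𝓝 0) (𝓝 0) := by
    simpa using (tendsto_id (x := 𝓝 (0 : ℝ))).smul_const x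
  have h : (fun t : ℝ => t ^ 2 • q x) =o[𝓝[≠] 0] fun t => t ^ 2 := by
    refine ((ho.comp_tendsto hline).trans_isBigO ?_).mono nhdsWithin_le_nhds |>.congr_left
      fun t => hq t x
    refine IsBigO.of_bound (‖x‖ ^ 2) (Eventually.of_forall fun t => ?_)
    simp [norm_smul, mul_pow, mul_comm]
  refine tendsto_nhds_unique (h.tendsto_inv_smul_nhds_zero.congr' ?_) tendsto_const_nhds |>.symm
  filter_upwards [self_mem_nhdsWithin] with t ht
  rw [smul_smul, inv_mul_cancel₀ (pow_ne_zero 2 ht), one_smul]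

theorem mul_apply_eq_zero_of_isLittleO {E : Type*} [NormedAddCommGroup E] [NormedSpace ℝ E]
    {L G : E →L[ℝ] ℝ} {g : E → ℝ} (hg : HasFDerivAt g G 0) (hg0 : g 0 = 0)
    (h : (fun x => L x * g x) =o[𝓝 0] fun x => ‖x‖ ^ 2) (x : E) : L x * G x = 0 := by
  have hGg : (fun x => G x - g x) =o[𝓝 0] fun x => ‖x‖ := by
    refine (hasFDerivAt_iff_isLittleO_nhds_zero.1 hg).neg_left.norm_right.congr_left fun x => ?_
    rw [zero_add, hg0]
    ring
  have hlin : (fun x => L x * (G x - g x)) =o[𝓝 0] fun x => ‖x‖ ^ 2 := by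
    simpa [sq] using (L.isBigO_id (𝓝 0)).norm_right.mul_isLittleO hGg
  have hq := (h.add hlin).congr_left fun x =>
    show L x * g x + L x * (G x - g x) = L x * G x by ring
  exact congrFun (eq_zero_of_isLittleO_sq_of_homogeneous (fun t x => by simp; ring) hq) x

theorem LinearMap.eq_zero_of_forall_mul_eq_zero {R M : Type*} [CommRing R] [NoZeroDivisors R]
    [AddCommGroup M] [Module R M] {L ℓ : M →ₗ[R] R} (hL : L ≠ 0) (h : ∀ x, L x * ℓ x = 0) :
    ℓ = 0 := by
  obtain ⟨x₀, hx₀⟩ := DFunLike.ne_iff.1 hL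
  have hℓx₀ : ℓ x₀ = 0 := (mul_eq_zero.1 (h x₀)).resolve_left hx₀
  ext x
  by_cases hx : L x = 0
  · have : L (x + x₀) ≠ 0 := by simpa [hx] using hx₀
    simpa [hℓx₀] using (mul_eq_zero.1 (h (x + x₀))).resolve_left this
  · exact (mul_eq_zero.1 (h x)).resolve_left hx

theorem HasFDerivAt.eq_zero_of_isLittleO_coord_mul {B : ℝ × ℝ →L[ℝ] ℝ × ℝ →L[ℝ] ℝ}
    (hB : ∀ x ≠ 0, 0 < B x x) {r : ℝ × ℝ → ℝ × ℝ} {M : ℝ × ℝ →L[ℝ] ℝ × ℝ}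
    (hr : HasFDerivAt r M 0) (hr0 : r 0 = 0)
    (h₁ : (fun a => a.1 * (B (r a) (1, 0) + B (1, 0) (r a))) =o[𝓝 0] fun a => ‖a‖ ^ 2)
    (h₂ : (fun a => a.2 * (B (r a) (0, 1) + B (0, 1) (r a))) =o[𝓝 0] fun a => ‖a‖ ^ 2) :
    M = 0 := by
  have hcoord : ∀ (L : ℝ × ℝ →L[ℝ] ℝ) (e : ℝ × ℝ), L ≠ 0 →
      (fun a => L a * (B (r a) e + B e (r a))) =o[𝓝 0] (fun a => ‖a‖ ^ 2) →
      ∀ a, B (M a) e + B e (M a) = 0 := by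
    intro L e hL h a
    have hg : HasFDerivAt (fun a => B (r a) e + B e (r a)) ((B.flip e).comp M + (B e).comp M) 0 :=
      ((B.flip e).hasFDerivAt.comp 0 hr).add ((B e).hasFDerivAt.comp 0 hr)
    have hℓ := LinearMap.eq_zero_of_forall_mul_eq_zero (L := (L : ℝ × ℝ →ₗ[ℝ] ℝ))
      (ℓ := (((B.flip e).comp M + (B e).comp M : ℝ × ℝ →L[ℝ] ℝ) : ℝ × ℝ →ₗ[ℝ] ℝ))
      (fun h => hL (ContinuousLinearMap.coe_injective h))
      (mul_apply_eq_zero_of_isLittleO hg (by simp [hr0]) h)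
    simpa using LinearMap.congr_fun hℓ a
  have h₁' := hcoord (ContinuousLinearMap.fst ℝ ℝ ℝ) (1, 0)
    (fun h => by simpa using DFunLike.congr_fun h (1, 0)) h₁
  have h₂' := hcoord (ContinuousLinearMap.snd ℝ ℝ ℝ) (0, 1)
    (fun h => by simpa using DFunLike.congr_fun h (0, 1)) h₂
  refine ContinuousLinearMap.ext fun a => ?_
  by_contra hMa
  have hbasis : ∀ y : ℝ × ℝ, y = y.1 • ((1 : ℝ), (0 : ℝ)) + y.2 • ((0 : ℝ), (1 : ℝ)) := fun y => by
    ext <;> simp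
  have hzero : B (M a) (M a) + B (M a) (M a) = 0 := by
    calc B (M a) (M a) + B (M a) (M a)
        = B (M a) ((M a).1 • (1, 0) + (M a).2 • (0, 1))
          + B ((M a).1 • (1, 0) + (M a).2 • (0, 1)) (M a) := by rw [← hbasis]
      _ = (M a).1 * (B (M a) (1, 0) + B (1, 0) (M a))
          + (M a).2 * (B (M a) (0, 1) + B (0, 1) (M a)) := by
        simp only [map_add, map_smul, add_apply, smul_apply, smul_eq_mul]
        ring
      _ = 0 := by rw [h₁', h₂', mul_zero, mul_zero, add_zero]
  linarith [hB _ hMa]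

noncomputable def dither (ω₁ ω₂ : ℝ) (a : ℝ × ℝ) (σ : ℝ) : ℝ × ℝ :=
  (a.1 * sin (ω₁ * σ), a.2 * sin (ω₂ * σ))

section Dither

variable {ω₁ ω₂ T : ℝ}

theorem dither_apply (ω₁ ω₂ : ℝ) (a : ℝ × ℝ) (σ : ℝ) :
    dither ω₁ ω₂ a σ = (a.1 * sin (ω₁ * σ), a.2 * sin (ω₂ * σ)) := rfl

theorem dither_eq_sum (ω₁ ω₂ : ℝ) (a : ℝ × ℝ) (σ : ℝ) :
    dither ω₁ ω₂ a σ
      = ∑ i, sin (![ω₁, ω₂] i * σ) • ![a.1 • ((1 : ℝ), (0 : ℝ)), a.2 • ((0 : ℝ), (1 : ℝ))] i := by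
  ext <;> simp [dither, mul_comm]

theorem norm_dither_le (ω₁ ω₂ : ℝ) (a : ℝ × ℝ) (σ : ℝ) : ‖dither ω₁ ω₂ a σ‖ ≤ ‖a‖ := by
  have hsin : ∀ θ, ‖sin θ‖ ≤ 1 := fun θ => by simpa using abs_sin_le_one θ
  refine max_le ?_ ?_
  · simpa [dither, abs_mul] using
      (mul_le_of_le_one_right (norm_nonneg a.1) (hsin (ω₁ * σ))).trans (norm_fst_le a)
  · simpa [dither, abs_mul] using
      (mul_le_of_le_one_right (norm_nonneg a.2) (hsin (ω₂ * σ))).trans (norm_snd_le a)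

@[fun_prop]
theorem continuous_dither (ω₁ ω₂ : ℝ) (a : ℝ × ℝ) : Continuous (dither ω₁ ω₂ a) := by
  unfold dither
  fun_prop

theorem commensurateFrequencies_pair {n₁ n₂ : ℕ} (hω₁ : 0 < ω₁) (hω₂ : 0 < ω₂) (hne : ω₁ ≠ ω₂)
    (hT₁ : ω₁ * T = 2 * π * n₁) (hT₂ : ω₂ * T = 2 * π * n₂) :
    CommensurateFrequencies ![ω₁, ω₂] T where
  pos := by simp [Fin.forall_fin_two, hω₁, hω₂]
  injective := by
    intro i j h
    fin_cases i <;> fin_cases j <;> simp_all [eq_comm]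
  mul_period := by
    simp only [Fin.forall_fin_two]
    exact ⟨⟨n₁, by simpa using hT₁⟩, ⟨n₂, by simpa using hT₂⟩⟩

theorem integral_bilin_add_dither (hω : CommensurateFrequencies ![ω₁, ω₂] T)
    (B : ℝ × ℝ →L[ℝ] ℝ × ℝ →L[ℝ] ℝ) (c a : ℝ × ℝ) :
    ∫ σ in (0 : ℝ)..T, B (c + dither ω₁ ω₂ a σ) (c + dither ω₁ ω₂ a σ)
      = T * B c c + T / 2 * (a.1 ^ 2 * B (1, 0) (1, 0) + a.2 ^ 2 * B (0, 1) (0, 1)) := by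
  simp_rw [dither_eq_sum, hω.integral_bilin_add_sum_smul, Fin.sum_univ_two]
  simp only [Matrix.cons_val_zero, Matrix.cons_val_one, map_smul, smul_apply, smul_eq_mul]
  ring

theorem integral_bilin_add_dither_mul_sin_fst (hω : CommensurateFrequencies ![ω₁, ω₂] T)
    (B : ℝ × ℝ →L[ℝ] ℝ × ℝ →L[ℝ] ℝ) (c a : ℝ × ℝ) :
    ∫ σ in (0 : ℝ)..T, B (c + dither ω₁ ω₂ a σ) (c + dither ω₁ ω₂ a σ) * sin (ω₁ * σ)
      = T / 2 * (a.1 * (B c (1, 0) + B (1, 0) c)) := by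
  have h := hω.integral_bilin_add_sum_smul_mul_sin B c
    ![a.1 • ((1 : ℝ), (0 : ℝ)), a.2 • ((0 : ℝ), (1 : ℝ))] 0
  simp_rw [← dither_eq_sum] at h
  simp only [Matrix.cons_val_zero, map_smul, smul_apply, smul_eq_mul] at h
  rw [h]
  ring

theorem integral_bilin_add_dither_mul_sin_snd (hω : CommensurateFrequencies ![ω₁, ω₂] T)
    (B : ℝ × ℝ →L[ℝ] ℝ × ℝ →L[ℝ] ℝ) (c a : ℝ × ℝ) :
    ∫ σ in (0 : ℝ)..T, B (c + dither ω₁ ω₂ a σ) (c + dither ω₁ ω₂ a σ) * sin (ω₂ * σ)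
      = T / 2 * (a.2 * (B c (0, 1) + B (0, 1) c)) := by
  have h := hω.integral_bilin_add_sum_smul_mul_sin B c
    ![a.1 • ((1 : ℝ), (0 : ℝ)), a.2 • ((0 : ℝ), (1 : ℝ))] 1
  simp_rw [← dither_eq_sum] at h
  simp only [Matrix.cons_val_one, Matrix.cons_val_zero, map_smul, smul_apply, smul_eq_mul] at h
  rw [h]
  ring

variable {v : ℝ × ℝ → ℝ} {B : ℝ × ℝ →L[ℝ] ℝ × ℝ →L[ℝ] ℝ} {r : ℝ × ℝ → ℝ × ℝ} {w : ℝ → ℝ}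

theorem isLittleO_integral_comp_add_dither_sub (hv : Continuous v)
    (hvB : (fun x => v x - B x x / 2) =o[𝓝 0] fun x => ‖x‖ ^ 2) (hrO : r =O[𝓝 0] fun a => a)
    (ω₁ ω₂ : ℝ) (hwc : Continuous w) (hw : ∀ σ, |w σ| ≤ 1) (T : ℝ) :
    (fun a => (∫ σ in (0 : ℝ)..T, v (r a + dither ω₁ ω₂ a σ) * w σ)
        - (∫ σ in (0 : ℝ)..T, B (r a + dither ω₁ ω₂ a σ) (r a + dither ω₁ ω₂ a σ) * w σ) / 2)
      =o[𝓝 0] fun a => ‖a‖ ^ 2 := by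
  obtain ⟨K, hK⟩ := hrO.bound
  have hX : ∀ᶠ a in 𝓝 0, ∀ σ, ‖r a + dither ω₁ ω₂ a σ‖ ≤ (K + 1) * ‖a‖ := by
    filter_upwards [hK] with a ha σ
    linarith [norm_add_le (r a) (dither ω₁ ω₂ a σ), norm_dither_le ω₁ ω₂ a σ]
  refine (hvB.intervalIntegral_comp_mul hX hw 0 T).congr_left fun a => ?_
  rw [← intervalIntegral.integral_div]
  simp_rw [sub_mul, div_mul_eq_mul_div]
  exact intervalIntegral.integral_sub (Continuous.intervalIntegrable (by fun_prop) 0 T)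
    (Continuous.intervalIntegrable (by fun_prop) 0 T)

theorem isLittleO_integral_bilin_add_dither (hv : Continuous v)
    (hvB : (fun x => v x - B x x / 2) =o[𝓝 0] fun x => ‖x‖ ^ 2) (hrO : r =O[𝓝 0] fun a => a)
    (hwc : Continuous w) (hw : ∀ σ, |w σ| ≤ 1) {U : Set (ℝ × ℝ)} (hU : U ∈ 𝓝 0)
    (h0 : ∀ a ∈ U, ∫ σ in (0 : ℝ)..T, v (r a + dither ω₁ ω₂ a σ) * w σ = 0) :
    (fun a => ∫ σ in (0 : ℝ)..T, B (r a + dither ω₁ ω₂ a σ) (r a + dither ω₁ ω₂ a σ) * w σ)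
      =o[𝓝 0] fun a => ‖a‖ ^ 2 := by
  refine ((isLittleO_integral_comp_add_dither_sub hv hvB hrO ω₁ ω₂ hwc hw T).const_mul_left
    (-2)).congr' ?_ .rfl
  filter_upwards [hU] with a ha
  rw [h0 a ha]
  ring

end Dither

theorem averaged_cost_second_order_expansion_general
    (v : ℝ × ℝ → ℝ) (hv : ContDiff ℝ 2 v) (hv0 : v 0 = 0)
    (hdv0 : fderiv ℝ v 0 = 0)
    (hHpos : ∀ x : ℝ × ℝ, x ≠ 0 → 0 < fderiv ℝ (fderiv ℝ v) 0 x x)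
    (T ω₁ ω₂ : ℝ) (hT : 0 < T) (hω₁ : 0 < ω₁) (hω₂ : 0 < ω₂) (hne : ω₁ ≠ ω₂)
    (n₁ n₂ : ℕ)
    (hT₁ : ω₁ * T = 2 * Real.pi * n₁) (hT₂ : ω₂ * T = 2 * Real.pi * n₂)
    (U : Set (ℝ × ℝ)) (hU : U ∈ nhds (0 : ℝ × ℝ))
    (r : ℝ × ℝ → ℝ × ℝ) (hr : ContDiffOn ℝ 2 r U) (hr0 : r 0 = 0)
    (heq₁ : ∀ a ∈ U,
      ∫ σ in (0 : ℝ)..T,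
        v (r a + (a.1 * Real.sin (ω₁ * σ), a.2 * Real.sin (ω₂ * σ))) * Real.sin (ω₁ * σ) = 0)
    (heq₂ : ∀ a ∈ U,
      ∫ σ in (0 : ℝ)..T,
        v (r a + (a.1 * Real.sin (ω₁ * σ), a.2 * Real.sin (ω₂ * σ))) * Real.sin (ω₂ * σ) = 0)
    (H₁₁ H₂₂ : ℝ)
    (hH₁₁ : H₁₁ = fderiv ℝ (fderiv ℝ v) 0 (1, 0) (1, 0))
    (hH₂₂ : H₂₂ = fderiv ℝ (fderiv ℝ v) 0 (0, 1) (0, 1)) :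
    Tendsto
      (fun a : ℝ × ℝ =>
        ((1 / T) * (∫ σ in (0 : ℝ)..T,
            v (r a + (a.1 * Real.sin (ω₁ * σ), a.2 * Real.sin (ω₂ * σ))))
          - (1 / 4) * (H₁₁ * a.1 ^ 2 + H₂₂ * a.2 ^ 2)) / ‖a‖ ^ 2)
      (𝓝[≠] (0 : ℝ × ℝ)) (𝓝 0) := by
  simp only [← dither_apply] at heq₁ heq₂ ⊢
  set B := fderiv ℝ (fderiv ℝ v) 0
  have hω := commensurateFrequencies_pair hω₁ hω₂ hne hT₁ hT₂
  have hvB : (fun x => v x - B x x / 2) =o[𝓝 0] fun x => ‖x‖ ^ 2 := by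
    simpa [hv0, hdv0, div_eq_inv_mul] using hv.isLittleO_sub_taylor_two 0
  obtain ⟨M, hM⟩ : ∃ M, HasFDerivAt r M 0 :=
    ⟨_, ((hr.contDiffAt hU).differentiableAt (by norm_num)).hasFDerivAt⟩
  have hrO : r =O[𝓝 0] fun a => a := by simpa [hr0] using hM.isBigO_sub
  have hhalf : T / 2 ≠ 0 := by positivity
  have h₁ := (isLittleO_const_mul_left_iff hhalf).1 <|
    (isLittleO_integral_bilin_add_dither hv.continuous hvB hrO (by fun_prop)
      (fun σ => abs_sin_le_one _) hU heq₁).congr_left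
      fun a => integral_bilin_add_dither_mul_sin_fst hω B (r a) a
  have h₂ := (isLittleO_const_mul_left_iff hhalf).1 <|
    (isLittleO_integral_bilin_add_dither hv.continuous hvB hrO (by fun_prop)
      (fun σ => abs_sin_le_one _) hU heq₂).congr_left
      fun a => integral_bilin_add_dither_mul_sin_snd hω B (r a) a
  have hro : r =o[𝓝 0] fun a => a := by
    simpa [hM.eq_zero_of_isLittleO_coord_mul hHpos hr0 h₁ h₂, hr0] using
      hasFDerivAt_iff_isLittleO_nhds_zero.1 hM
  have hQ : (fun a => B (r a) (r a)) =o[𝓝 0] fun a => ‖a‖ ^ 2 :=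
    B.isBoundedBilinearMap.isBigO_comp.trans_isLittleO
      ((hro.norm_norm.mul hro.norm_norm).congr_right fun a => (sq _).symm)
  have hrem := isLittleO_integral_comp_add_dither_sub hv.continuous hvB hrO ω₁ ω₂
    continuous_const (w := fun _ => 1) (fun _ => by simp) T
  refine (((hQ.const_mul_left (1 / 2)).add (hrem.const_mul_left T⁻¹)).congr_left
    fun a => ?_).mono nhdsWithin_le_nhds |>.tendsto_div_nhds_zero
  simp only [mul_one, integral_bilin_add_dither hω, hH₁₁, hH₂₂]
  field_simp
  ring

theorem averaged_cost_second_order_expansion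
    (v : ℝ × ℝ → ℝ) (hv : ContDiff ℝ 2 v) (hv0 : v 0 = 0)
    (hdv0 : fderiv ℝ v 0 = 0)
    (hHpos : ∀ x : ℝ × ℝ, x ≠ 0 → 0 < fderiv ℝ (fderiv ℝ v) 0 x x)
    (T ω₁ ω₂ : ℝ) (hT : 0 < T) (hω₁ : 0 < ω₁) (hω₂ : 0 < ω₂) (hne : ω₁ ≠ ω₂)
    (n₁ n₂ : ℕ) (hn₁ : 0 < n₁) (hn₂ : 0 < n₂)
    (hT₁ : ω₁ * T = 2 * Real.pi * n₁) (hT₂ : ω₂ * T = 2 * Real.pi * n₂)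
    (U : Set (ℝ × ℝ)) (hU : U ∈ nhds (0 : ℝ × ℝ))
    (r : ℝ × ℝ → ℝ × ℝ) (hr : ContDiffOn ℝ 2 r U) (hr0 : r 0 = 0)
    (heq₁ : ∀ a ∈ U,
      ∫ σ in (0 : ℝ)..T,
        v (r a + (a.1 * Real.sin (ω₁ * σ), a.2 * Real.sin (ω₂ * σ))) * Real.sin (ω₁ * σ) = 0)
    (heq₂ : ∀ a ∈ U,
      ∫ σ in (0 : ℝ)..T,
        v (r a + (a.1 * Real.sin (ω₁ * σ), a.2 * Real.sin (ω₂ * σ))) * Real.sin (ω₂ * σ) = 0)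
    (H₁₁ H₂₂ : ℝ)
    (hH₁₁ : H₁₁ = fderiv ℝ (fderiv ℝ v) 0 (1, 0) (1, 0))
    (hH₂₂ : H₂₂ = fderiv ℝ (fderiv ℝ v) 0 (0, 1) (0, 1)) :
    Tendsto
      (fun a : ℝ × ℝ =>
        ((1 / T) * (∫ σ in (0 : ℝ)..T,
            v (r a + (a.1 * Real.sin (ω₁ * σ), a.2 * Real.sin (ω₂ * σ))))
          - (1 / 4) * (H₁₁ * a.1 ^ 2 + H₂₂ * a.2 ^ 2)) / ‖a‖ ^ 2)
      (𝓝[≠] (0 : ℝ × ℝ)) (𝓝 0) :=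
  averaged_cost_second_order_expansion_general v hv hv0 hdv0 hHpos T ω₁ ω₂ hT hω₁ hω₂ hne n₁ n₂ hT₁
    hT₂ U hU r hr hr0 heq₁ heq₂ H₁₁ H₂₂ hH₁₁ hH₂₂
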